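/- arXiv:2210.06624 — 8 statements merged into one kernel-verified Lean document; each statement's English description precedes it below -/
import Mathlib

section
/- For any two probability mass functions p_1, p_2 on the integers, q(p_1 * p_2) \geq \max\{q(p_1), q(p_2)\}, where * denotes convolution; i.e., the smoothness parameter q does not decrease under convolution. -/
private lemma swap_conv (p₁ p₂ : ℤ → ℝ) (k : ℤ) :
    ∑' j : ℤ, p₁ j * p₂ (k - j) = ∑' j : ℤ, p₂ j * p₁ (k - j) := by
  calc ∑' j : ℤ, p₁ j * p₂ (k - j) = ∑' j : ℤ, p₂ (k - j) * p₁ j := by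
        simp_rw [mul_comm]
    _ = ∑' j : ℤ, p₂ j * p₁ (k - j) := by
        have h := (Equiv.subLeft k).tsum_eq (fun j : ℤ => p₂ j * p₁ (k - j))
        simpa [sub_sub_cancel] using h

private lemma prod_summable (p₁ g : ℤ → ℝ) (hp₁ : ∀ k, 0 ≤ p₁ k) (hs₁ : Summable p₁)
    (hg : ∀ k, 0 ≤ g k) (hsg : Summable g) :
    Summable (fun x : ℤ × ℤ => p₁ x.1 * g (x.2 - x.1)) := by
  refine (summable_prod_of_nonneg (fun x => mul_nonneg (hp₁ _) (hg _))).mpr ⟨?_, ?_⟩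
  · intro j
    dsimp only
    exact (((Equiv.subRight j).summable_iff (f := g)).mpr hsg).mul_left _
  · dsimp only
    have he : (fun j : ℤ => ∑' k : ℤ, p₁ j * g (k - j)) = fun j => p₁ j * ∑' k, g k := by
      funext j
      rw [tsum_mul_left]
      congr 1
      exact (Equiv.subRight j).tsum_eq g
    simpa [he] using hs₁.mul_right (∑' k, g k)

private lemma key (p₁ p₂ : ℤ → ℝ)
    (hp₁ : ∀ k, 0 ≤ p₁ k) (hs₁ : HasSum p₁ 1)
    (hp₂ : ∀ k, 0 ≤ p₂ k) (hs₂ : HasSum p₂ 1) :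
    (∑' k : ℤ, min (p₂ k) (p₂ (k + 1))) ≤
      ∑' k : ℤ, min (∑' j : ℤ, p₁ j * p₂ (k - j)) (∑' j : ℤ, p₁ j * p₂ (k + 1 - j)) := by
  set m : ℤ → ℝ := fun k => min (p₂ k) (p₂ (k + 1)) with hm
  have hm0 : ∀ k, 0 ≤ m k := fun k => le_min (hp₂ k) (hp₂ (k + 1))
  have hmle : ∀ k, m k ≤ p₂ k := fun k => min_le_left _ _
  have hsm : Summable m := Summable.of_nonneg_of_le hm0 hmle hs₂.summable
  have hp₂le : ∀ k, p₂ k ≤ 1 := fun k => le_hasSum hs₂ k (fun j _ => hp₂ j)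
  -- product summability for m and p₂
  have hprodm := prod_summable p₁ m hp₁ hs₁.summable hm0 hsm
  have hprodp := prod_summable p₁ p₂ hp₁ hs₁.summable hp₂ hs₂.summable
  -- summable in j for fixed k
  have hjm : ∀ k : ℤ, Summable fun j => p₁ j * m (k - j) := by
    intro k
    exact ((summable_prod_of_nonneg
      (f := fun x : ℤ × ℤ => p₁ x.2 * m (x.1 - x.2))
      (fun x => mul_nonneg (hp₁ _) (hm0 _))).mp hprodm.prod_symm).1 k
  have hjp : ∀ k : ℤ, Summable fun j => p₁ j * p₂ (k - j) := by
    intro k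
    exact ((summable_prod_of_nonneg
      (f := fun x : ℤ × ℤ => p₁ x.2 * p₂ (x.1 - x.2))
      (fun x => mul_nonneg (hp₁ _) (hp₂ _))).mp hprodp.prod_symm).1 k
  -- summable in k of inner sums
  have hswapm : Summable fun k : ℤ => ∑' j : ℤ, p₁ j * m (k - j) := by
    exact ((summable_prod_of_nonneg
      (f := fun x : ℤ × ℤ => p₁ x.2 * m (x.1 - x.2))
      (fun x => mul_nonneg (hp₁ _) (hm0 _))).mp hprodm.prod_symm).2
  have hswapp : Summable fun k : ℤ => ∑' j : ℤ, p₁ j * p₂ (k - j) := by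
    exact ((summable_prod_of_nonneg
      (f := fun x : ℤ × ℤ => p₁ x.2 * p₂ (x.1 - x.2))
      (fun x => mul_nonneg (hp₁ _) (hp₂ _))).mp hprodp.prod_symm).2
  -- termwise inequality
  have hterm : ∀ k : ℤ, (∑' j : ℤ, p₁ j * m (k - j)) ≤
      min (∑' j : ℤ, p₁ j * p₂ (k - j)) (∑' j : ℤ, p₁ j * p₂ (k + 1 - j)) := by
    intro k
    refine le_min ?_ ?_
    · exact Summable.tsum_le_tsum (fun j => mul_le_mul_of_nonneg_left (min_le_left _ _) (hp₁ j))
        (hjm k) (hjp k)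
    · have h2 : ∀ j : ℤ, p₁ j * m (k - j) ≤ p₁ j * p₂ (k + 1 - j) := by
        intro j
        have : k + 1 - j = (k - j) + 1 := by ring
        rw [this]
        exact mul_le_mul_of_nonneg_left (min_le_right _ _) (hp₁ j)
      have hj1 : Summable fun j : ℤ => p₁ j * p₂ (k + 1 - j) := by
        have := hjp (k + 1)
        simpa using this
      exact Summable.tsum_le_tsum h2 (hjm k) hj1
  -- Fubini value
  have hfub : ∑' k : ℤ, ∑' j : ℤ, p₁ j * m (k - j) = ∑' k : ℤ, m k := by
    have hc : ∑' k : ℤ, ∑' j : ℤ, p₁ j * m (k - j)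
        = ∑' j : ℤ, ∑' k : ℤ, p₁ j * m (k - j) :=
      Summable.tsum_comm (f := fun j k : ℤ => p₁ j * m (k - j)) hprodm
    rw [hc]
    have he : ∀ j : ℤ, ∑' k : ℤ, p₁ j * m (k - j) = p₁ j * ∑' k, m k := by
      intro j
      rw [tsum_mul_left]
      congr 1
      exact (Equiv.subRight j).tsum_eq m
    simp_rw [he]
    rw [tsum_mul_right, hs₁.tsum_eq, one_mul]
  -- summability of RHS
  have hmin : Summable fun k : ℤ =>
      min (∑' j : ℤ, p₁ j * p₂ (k - j)) (∑' j : ℤ, p₁ j * p₂ (k + 1 - j)) := by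
    refine Summable.of_nonneg_of_le (fun k => le_min ?_ ?_) (fun k => min_le_left _ _) hswapp
    · exact tsum_nonneg fun j => mul_nonneg (hp₁ j) (hp₂ _)
    · exact tsum_nonneg fun j => mul_nonneg (hp₁ j) (hp₂ _)
  calc (∑' k : ℤ, m k) = ∑' k : ℤ, ∑' j : ℤ, p₁ j * m (k - j) := hfub.symm
    _ ≤ _ := Summable.tsum_le_tsum hterm hswapm hmin

/-- The smoothness parameter `q(p) = ∑_k min (p k) (p (k+1))` does not decrease
under convolution: `q(p₁ * p₂) ≥ max (q p₁) (q p₂)`, where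
`(p₁ * p₂)(k) = ∑_j p₁ j * p₂ (k - j)`. -/
theorem q_convolution_ge_max (p₁ p₂ : ℤ → ℝ)
    (hp₁ : ∀ k, 0 ≤ p₁ k) (hs₁ : HasSum p₁ 1)
    (hp₂ : ∀ k, 0 ≤ p₂ k) (hs₂ : HasSum p₂ 1) :
    max (∑' k : ℤ, min (p₁ k) (p₁ (k + 1))) (∑' k : ℤ, min (p₂ k) (p₂ (k + 1))) ≤
      ∑' k : ℤ, min (∑' j : ℤ, p₁ j * p₂ (k - j)) (∑' j : ℤ, p₁ j * p₂ (k + 1 - j)) := by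
  refine max_le ?_ (key p₁ p₂ hp₁ hs₁ hp₂ hs₂)
  have h := key p₂ p₁ hp₂ hs₂ hp₁ hs₁
  have hrw : ∀ k : ℤ, ∑' j : ℤ, p₂ j * p₁ (k - j) = ∑' j : ℤ, p₁ j * p₂ (k - j) :=
    fun k => (swap_conv p₁ p₂ k).symm
  simpa [hrw] using h
end

section
/- If X is an integer-valued random variable with p.m.f. p_X and Shannon entropy H(X), then e^{-H(X)} \leq 1 - q, where q = \sum_{k} \min\{p_X(k), p_X(k+1)\}. -/
/-- For an integer-valued random variable `X` with p.m.f. `p` and (finite) Shannon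
entropy `H(X) = -∑_k p k * log (p k)` (natural logarithm), one has
`exp (-H(X)) ≤ 1 - q`, where `q = ∑_k min (p k) (p (k+1))`. -/
theorem exp_neg_entropy_le_one_sub_q (p : ℤ → ℝ) (hp : ∀ k, 0 ≤ p k) (hsum : HasSum p 1)
    (hent : Summable (fun k : ℤ => -(p k * Real.log (p k)))) :
    Real.exp (-(∑' k : ℤ, -(p k * Real.log (p k)))) ≤
      1 - ∑' k : ℤ, min (p k) (p (k + 1)) := by
  set Q := ∑' k : ℤ, min (p k) (p (k + 1)) with hQdef
  have hpsum : Summable p := hsum.summable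
  have hminsum : Summable (fun k : ℤ => min (p k) (p (k + 1))) :=
    Summable.of_nonneg_of_le (fun k => le_min (hp k) (hp (k + 1)))
      (fun k => min_le_left _ _) hpsum
  have hf : HasSum (fun k : ℤ => p k - min (p k) (p (k + 1))) (1 - Q) :=
    hsum.sub hminsum.hasSum
  have hfnn : ∀ k, 0 ≤ p k - min (p k) (p (k + 1)) :=
    fun k => sub_nonneg.2 (min_le_left _ _)
  have key : ∀ k0 : ℤ, p k0 ≤ 1 - Q := by
    intro k0
    have hinj : Function.Injective (fun i : ℕ => k0 + (i : ℤ)) := by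
      intro a b h
      simp only at h
      omega
    have hshift : Summable (fun n : ℕ => p (k0 + (n : ℤ))) :=
      hpsum.comp_injective hinj
    have step : ∀ n : ℕ, p k0 - (1 - Q) ≤ p (k0 + (n : ℤ)) := by
      intro n
      have htel : ∑ i ∈ Finset.range n, (p (k0 + (i : ℤ)) - p (k0 + (i : ℤ) + 1))
          = p k0 - p (k0 + (n : ℤ)) := by
        have := Finset.sum_range_sub' (fun i : ℕ => p (k0 + (i : ℤ))) n
        simp only [Nat.cast_zero, add_zero, Nat.cast_add, Nat.cast_one] at this
        rw [← this]
        apply Finset.sum_congr rfl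
        intro i _
        ring_nf
      have hsum_le : ∑ i ∈ Finset.range n,
          (p (k0 + (i : ℤ)) - min (p (k0 + (i : ℤ))) (p (k0 + (i : ℤ) + 1))) ≤ 1 - Q := by
        have h1 := Summable.sum_le_tsum ((Finset.range n).map ⟨fun i : ℕ => k0 + (i : ℤ), hinj⟩)
          (fun i _ => hfnn i) hf.summable
        rw [Finset.sum_map, hf.tsum_eq] at h1
        exact h1
      have h2 : p k0 - p (k0 + (n : ℤ)) ≤ ∑ i ∈ Finset.range n,
          (p (k0 + (i : ℤ)) - min (p (k0 + (i : ℤ))) (p (k0 + (i : ℤ) + 1))) := by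
        rw [← htel]
        apply Finset.sum_le_sum
        intro i _
        have := min_le_right (p (k0 + (i : ℤ))) (p (k0 + (i : ℤ) + 1))
        linarith
      linarith
    have hlim : Filter.Tendsto (fun n : ℕ => p (k0 + (n : ℤ)))
        Filter.atTop (nhds 0) := hshift.tendsto_atTop_zero
    have := ge_of_tendsto' hlim step
    linarith
  have hex : ∃ k, 0 < p k := by
    by_contra h
    push_neg at h
    have hz : p = fun _ => 0 := funext fun k => le_antisymm (h k) (hp k)
    rw [hz] at hsum
    have := hasSum_zero.unique hsum
    norm_num at this
  obtain ⟨k1, hk1⟩ := hex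
  have hQpos : 0 < 1 - Q := lt_of_lt_of_le hk1 (key k1)
  have hterm : ∀ k : ℤ, p k * (-Real.log (1 - Q)) ≤ -(p k * Real.log (p k)) := by
    intro k
    rcases eq_or_lt_of_le (hp k) with h | h
    · simp [← h]
    · have hlog : Real.log (p k) ≤ Real.log (1 - Q) := Real.log_le_log h (key k)
      nlinarith [hp k]
  have hc : HasSum (fun k : ℤ => p k * (-Real.log (1 - Q))) (-Real.log (1 - Q)) := by
    simpa using hsum.mul_right (-Real.log (1 - Q))
  have hH : -Real.log (1 - Q) ≤ ∑' k : ℤ, -(p k * Real.log (p k)) := by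
    rw [← hc.tsum_eq]
    exact Summable.tsum_le_tsum hterm hc.summable hent
  calc Real.exp (-(∑' k : ℤ, -(p k * Real.log (p k))))
      ≤ Real.exp (Real.log (1 - Q)) := Real.exp_le_exp.2 (by linarith)
    _ = 1 - Q := Real.exp_log hQpos
end

section
/- If X is an integer-valued random variable with p.m.f. p, then q = \sum_k \min\{p(k), p(k+1)\} \leq 1 - \max_k p(k). -/
/-- For an integer-valued random variable `X` with p.m.f. `p` attaining its maximum
at some integer `N`, one has `q = ∑_k min (p k) (p (k+1)) ≤ 1 - max_k p k`. -/
theorem q_le_one_sub_pmax (p : ℤ → ℝ) (hp : ∀ k, 0 ≤ p k) (hsum : HasSum p 1)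
    (N : ℤ) (hmax : ∀ k, p k ≤ p N) :
    ∑' k : ℤ, min (p k) (p (k + 1)) ≤ 1 - p N := by
  have hpsum : Summable p := hsum.summable
  set g : ℤ → ℤ := fun k => if k < N then k else k + 1 with hg
  have hginj : Function.Injective g := by
    intro a b hab
    simp only [hg] at hab
    by_cases ha : a < N <;> by_cases hb : b < N <;> simp [ha, hb] at hab <;> omega
  have hgneN : ∀ k, g k ≠ N := by
    intro k
    simp only [hg]
    split <;> omega
  set q : ℤ → ℝ := fun j => if j = N then 0 else p j with hq
  have hqsum : Summable q := by
    apply hpsum.of_nonneg_of_le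
    · intro j; simp only [hq]; split
      · exact le_refl 0
      · exact hp j
    · intro j; simp only [hq]; split
      · exact hp j
      · exact le_refl _
  have hle : ∀ k, min (p k) (p (k + 1)) ≤ q (g k) := by
    intro k
    have : q (g k) = p (g k) := by simp [hq, hgneN k]
    rw [this]
    simp only [hg]
    split
    · exact min_le_left _ _
    · exact min_le_right _ _
  have hfsum : Summable (fun k : ℤ => min (p k) (p (k + 1))) := by
    apply (hqsum.comp_injective hginj).of_nonneg_of_le
    · intro k; exact le_min (hp k) (hp (k + 1))
    · exact hle
  have h1 : ∑' k : ℤ, min (p k) (p (k + 1)) ≤ ∑' j : ℤ, q j := by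
    apply Summable.tsum_le_tsum_of_inj g hginj
    · intro c _; simp only [hq]; split
      · exact le_refl 0
      · exact hp c
    · exact hle
    · exact hfsum
    · exact hqsum
  have h2 : ∑' j : ℤ, q j = 1 - p N := by
    have := Summable.tsum_eq_add_tsum_ite hpsum N
    rw [hsum.tsum_eq] at this
    simp only [hq]
    linarith
  linarith
end

section
/- Let X be a log-concave random variable on the integers with mean \mu \in \mathbb{R} and variance \sigma^2, and let \delta > 0. If \sigma > 4^{1/(2\delta)}, then the location N_{max} of the (last) mode of X satisfies \mu - \sigma^{3/2+\delta} - 1 < N_{max} < \mu + \sigma^{3/2+\delta} + 1. -/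
/-- Let `X` be a log-concave random variable on the integers with p.m.f. `p`,
mean `μ` and variance `σ²`, and let `δ > 0`.  Let `N` be the last mode of `p` and
assume the Bobkov–Marsiglietti–Melbourne bound `1/(4σ) ≤ p N`.  If `σ > 4^(1/(2δ))`,
then `μ - σ^(3/2+δ) - 1 < N < μ + σ^(3/2+δ) + 1`. -/
theorem mode_location_bound (p : ℤ → ℝ) (hp : ∀ k, 0 ≤ p k) (hsum : HasSum p 1)
    (hlc : ∀ k : ℤ, p (k - 1) * p (k + 1) ≤ p k ^ 2)
    (hsupp : ∀ a b k : ℤ, a ≤ k → k ≤ b → 0 < p a → 0 < p b → 0 < p k)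
    (μ σ δ : ℝ) (hδ : 0 < δ)
    (hmean : HasSum (fun k : ℤ => (k : ℝ) * p k) μ)
    (hvar : HasSum (fun k : ℤ => ((k : ℝ) - μ) ^ 2 * p k) (σ ^ 2))
    (N : ℤ) (hmax : ∀ k, p k ≤ p N) (hlast : ∀ k, p k = p N → k ≤ N)
    (hbmm : 1 / (4 * σ) ≤ p N)
    (hσ : σ > (4 : ℝ) ^ (1 / (2 * δ))) :
    μ - σ ^ ((3 : ℝ) / 2 + δ) - 1 < (N : ℝ) ∧ (N : ℝ) < μ + σ ^ ((3 : ℝ) / 2 + δ) + 1 := by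
  have h4 : (0:ℝ) < (4:ℝ) ^ (1 / (2 * δ)) := Real.rpow_pos_of_pos (by norm_num) _
  have hσ0 : 0 < σ := lt_trans h4 hσ
  have hpN : 0 < p N := lt_of_lt_of_le (by positivity) hbmm
  have hterm : ((N:ℝ) - μ) ^ 2 * p N ≤ σ ^ 2 :=
    le_hasSum hvar N (fun k _ => mul_nonneg (sq_nonneg _) (hp k))
  have h2 : (2:ℝ) < σ ^ δ := by
    have hlt : ((4:ℝ) ^ (1 / (2*δ))) ^ δ < σ ^ δ :=
      Real.rpow_lt_rpow (le_of_lt h4) hσ hδ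
    have heq : ((4:ℝ) ^ (1 / (2*δ))) ^ δ = 2 := by
      rw [← Real.rpow_mul (by norm_num : (0:ℝ) ≤ 4)]
      rw [show (1/(2*δ))*δ = 1/2 by field_simp]
      rw [show (4:ℝ) = 2 ^ (2:ℕ) by norm_num, ← Real.rpow_natCast 2 2,
          ← Real.rpow_mul (by norm_num : (0:ℝ) ≤ 2)]
      norm_num
    linarith [heq ▸ hlt]
  set t := σ ^ ((3:ℝ)/2) with ht
  have ht0 : 0 < t := Real.rpow_pos_of_pos hσ0 _
  have htsq : t ^ 2 = σ ^ 3 := by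
    rw [ht, ← Real.rpow_natCast (σ ^ ((3:ℝ)/2)) 2, ← Real.rpow_mul hσ0.le,
        show (3:ℝ)/2 * ((2:ℕ):ℝ) = ((3:ℕ):ℝ) by push_cast; ring, Real.rpow_natCast]
  have hsq : ((N:ℝ) - μ) ^ 2 ≤ 4 * σ ^ 3 := by
    have h1 : ((N:ℝ) - μ) ^ 2 * (1 / (4*σ)) ≤ σ ^ 2 :=
      le_trans (mul_le_mul_of_nonneg_left hbmm (sq_nonneg _)) hterm
    have h2' : ((N:ℝ) - μ) ^ 2 ≤ σ ^ 2 * (4 * σ) := by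
      rw [mul_one_div] at h1
      exact (div_le_iff₀ (by positivity)).mp h1
    nlinarith
  have habs : ((N:ℝ) - μ) ^ 2 ≤ (2 * t) ^ 2 := by nlinarith
  obtain ⟨hl, hr⟩ := abs_le_of_sq_le_sq' habs (by positivity)
  have hs : σ ^ ((3:ℝ)/2 + δ) = t * σ ^ δ := Real.rpow_add hσ0 _ _
  have h2t : 2 * t < t * σ ^ δ := by nlinarith
  constructor <;> rw [hs] <;> nlinarith
end

section
/- If X is a log-concave random variable on the integers with variance \sigma^2 \geq 1, then 1 - q \leq 1/\sigma, where q = \sum_k \min\{p_X(k), p_X(k+1)\}. Equivalently, the total variation distance between X and X+1 is at most 1/\sigma. -/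
private lemma exists_argmax_pmf (p : ℤ → ℝ) (hp : ∀ k, 0 ≤ p k) (hsum : HasSum p 1) :
    ∃ m, 0 < p m ∧ ∀ k, p k ≤ p m := by
  have hsummable : Summable p := hsum.summable
  have hk0 : ∃ k0, 0 < p k0 := by
    by_contra h
    push_neg at h
    have hz : ∀ k, p k = 0 := fun k => le_antisymm (h k) (hp k)
    have hz' : HasSum p 0 := by
      rw [show p = fun _ => (0:ℝ) from funext hz]; exact hasSum_zero
    have : (1 : ℝ) = 0 := hsum.unique hz' 
    norm_num at this
  obtain ⟨k0, hk0⟩ := hk0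
  have hev : ∀ᶠ k in Filter.cofinite, p k < p k0 :=
    hsummable.tendsto_cofinite_zero.eventually_lt_const hk0
  have hfin : {k : ℤ | ¬ p k < p k0}.Finite := Filter.eventually_cofinite.mp hev
  have hne : hfin.toFinset.Nonempty := ⟨k0, by simp [lt_irrefl]⟩
  obtain ⟨m, hmmem, hmax⟩ := hfin.toFinset.exists_max_image p hne
  refine ⟨m, ?_, ?_⟩
  · have : ¬ p m < p k0 := by simpa using hmmem
    exact lt_of_lt_of_le hk0 (not_lt.mp this)
  · intro k
    by_cases hk : p k < p k0
    · have : ¬ p m < p k0 := by simpa using hmmem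
      exact le_of_lt (lt_of_lt_of_le hk (not_lt.mp this))
    · exact hmax k (by simpa using hk)

/-- If `X` is a log-concave random variable on the integers with p.m.f. `p` and
variance `σ² ≥ 1`, then (assuming the Bobkov–Marsiglietti–Melbourne bound
`max_k p k ≤ 1/σ`) one has `1 - q ≤ 1/σ`, where `q = ∑_k min (p k) (p (k+1))`;
equivalently, the total variation distance between `X` and `X + 1` is at most `1/σ`. -/
theorem one_sub_q_le_inv_sigma (p : ℤ → ℝ) (hp : ∀ k, 0 ≤ p k) (hsum : HasSum p 1)
    (hlc : ∀ k : ℤ, p (k - 1) * p (k + 1) ≤ p k ^ 2)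
    (hsupp : ∀ a b k : ℤ, a ≤ k → k ≤ b → 0 < p a → 0 < p b → 0 < p k)
    (μ σ : ℝ) (hσ : 1 ≤ σ)
    (hmean : HasSum (fun k : ℤ => (k : ℝ) * p k) μ)
    (hvar : HasSum (fun k : ℤ => ((k : ℝ) - μ) ^ 2 * p k) (σ ^ 2))
    (hbmm : ∀ k, p k ≤ 1 / σ) :
    1 - ∑' k : ℤ, min (p k) (p (k + 1)) ≤ 1 / σ := by
  obtain ⟨m, hm0, hmax⟩ := exists_argmax_pmf p hp hsum
  -- unimodality, decreasing side
  have hdown : ∀ k : ℤ, m ≤ k → p (k + 1) ≤ p k := by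
    by_contra h
    push_neg at h
    obtain ⟨k, hmk, hk⟩ := h
    have hpk1 : 0 < p (k + 1) := lt_of_le_of_lt (hp k) hk
    have key : ∀ n : ℕ, m ≤ k - n → p (k - n) < p (k - n + 1) := by
      intro n
      induction n with
      | zero => intro _; simpa using hk
      | succ n ih =>
        intro hmn
        have hmn' : m ≤ k - n := by omega
        have ihn := ih hmn'
        have hpos : 0 < p (k - n) := hsupp m (k + 1) (k - n) hmn' (by omega) hm0 hpk1
        have hlcn := hlc (k - n)
        -- p (k - n - 1) * p (k - n + 1) ≤ p (k - n) ^ 2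
        have h1 : p (k - n - 1) * p (k - n + 1) < p (k - n) * p (k - n + 1) := by
          calc p (k - n - 1) * p (k - n + 1) ≤ p (k - n) ^ 2 := hlcn
            _ < p (k - n) * p (k - n + 1) := by
                have := mul_lt_mul_of_pos_left ihn hpos
                nlinarith
        have h2 : p (k - n - 1) < p (k - n) := by
          have hpk1n : 0 < p (k - n + 1) := lt_of_le_of_lt (hp _) ihn
          exact lt_of_mul_lt_mul_right (by linarith) (le_of_lt hpk1n)
        have : k - (n + 1 : ℕ) = k - n - 1 := by push_cast; ring
        rw [this]
        have : k - n - 1 + 1 = k - n := by ring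
        rw [this]
        exact h2
    have hkm : m ≤ k - ((k - m).toNat : ℤ) := by omega
    have := key (k - m).toNat hkm
    have heq : k - ((k - m).toNat : ℤ) = m := by omega
    rw [heq] at this
    exact absurd (hmax (m + 1)) (not_le.mpr this)
  -- increasing side
  have hup : ∀ k : ℤ, k < m → p k ≤ p (k + 1) := by
    by_contra h
    push_neg at h
    obtain ⟨k, hkm, hk⟩ := h
    have hpk : 0 < p k := lt_of_le_of_lt (hp (k + 1)) hk
    have key : ∀ n : ℕ, k + n + 1 ≤ m → p (k + n + 1) < p (k + n) := by
      intro n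
      induction n with
      | zero => intro _; simpa using hk
      | succ n ih =>
        intro hmn
        have hmn' : k + n + 1 ≤ m := by omega
        have ihn := ih hmn'
        have hpos : 0 < p (k + n + 1) := hsupp k m (k + n + 1) (by omega) hmn' hpk hm0
        have hlcn := hlc (k + n + 1)
        have hprev : k + n + 1 - 1 = k + n := by ring
        rw [hprev] at hlcn
        have h1 : p (k + n) * p (k + n + 1 + 1) < p (k + n) * p (k + n + 1) := by
          calc p (k + n) * p (k + n + 1 + 1) ≤ p (k + n + 1) ^ 2 := hlcn
            _ < p (k + n) * p (k + n + 1) := by nlinarith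
        have hpn : 0 < p (k + n) := lt_trans hpos ihn
        have h2 : p (k + n + 1 + 1) < p (k + n + 1) := lt_of_mul_lt_mul_left h1 (le_of_lt hpn)
        have e1 : k + ((n + 1 : ℕ) : ℤ) + 1 = k + n + 1 + 1 := by push_cast; ring
        have e2 : k + ((n + 1 : ℕ) : ℤ) = k + n + 1 := by push_cast; ring
        rw [e1, e2]
        exact h2
    have hn : k + ((m - k - 1).toNat : ℤ) + 1 = m := by omega
    have := key (m - k - 1).toNat (by omega)
    rw [hn] at this
    exact absurd (hmax (k + ((m - k - 1).toNat : ℤ))) (not_le.mpr this)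
  -- the difference function
  set d : ℤ → ℝ := fun k => p k - min (p k) (p (k + 1)) with hd
  have hd_nonneg : ∀ k, 0 ≤ d k := fun k => by simp [hd, min_le_left]
  have hd_zero : ∀ k, k < m → d k = 0 := by
    intro k hk
    simp [hd, min_eq_left (hup k hk)]
  have hd_ge : ∀ k, m ≤ k → d k = p k - p (k + 1) := by
    intro k hk
    simp [hd, min_eq_right (hdown k hk)]
  -- telescoping
  have htel : ∀ n : ℕ, ∑ k ∈ Finset.Icc m (m + n), d k = p m - p (m + n + 1) := by
    intro n
    induction n with
    | zero => simp [hd_ge m le_rfl]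
    | succ n ih =>
      have hins : Finset.Icc m (m + ((n + 1 : ℕ) : ℤ)) =
          insert (m + n + 1) (Finset.Icc m (m + n)) := by
        ext x
        simp only [Finset.mem_Icc, Finset.mem_insert]
        omega
      rw [hins, Finset.sum_insert (by simp only [Finset.mem_Icc]; omega), ih,
        hd_ge (m + n + 1) (by omega)]
      push_cast
      ring
  -- summability
  have hsummable : Summable p := hsum.summable
  have hmin_summable : Summable (fun k : ℤ => min (p k) (p (k + 1))) :=
    Summable.of_nonneg_of_le (fun k => le_min (hp k) (hp (k + 1)))
      (fun k => min_le_left _ _) hsummable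
  have hd_summable : Summable d := hsummable.sub hmin_summable
  -- finite sums of d are bounded by p m
  have hbound : ∀ S : Finset ℤ, ∑ k ∈ S, d k ≤ p m := by
    intro S
    have hfilter : ∑ k ∈ S, d k = ∑ k ∈ S.filter (fun k => m ≤ k), d k := by
      rw [Finset.sum_filter]
      apply Finset.sum_congr rfl
      intro k _
      by_cases hk : m ≤ k
      · simp [hk]
      · simp [hk, hd_zero k (by omega)]
    rw [hfilter]
    rcases (S.filter (fun k => m ≤ k)).eq_empty_or_nonempty with he | hne
    · rw [he]; simp [le_of_lt hm0]
    · set T := S.filter (fun k => m ≤ k)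
      set b := T.max' hne
      have hb : ∀ k ∈ T, k ≤ b := fun k hk => T.le_max' k hk
      have hmb : m ≤ b := by
        obtain ⟨x, hx⟩ := hne
        have : m ≤ x := (Finset.mem_filter.mp hx).2
        exact le_trans this (hb x hx)
      have hsub : T ⊆ Finset.Icc m (m + ((b - m).toNat : ℤ)) := by
        intro k hk
        simp only [Finset.mem_Icc]
        constructor
        · exact (Finset.mem_filter.mp hk).2
        · have := hb k hk; omega
      calc ∑ k ∈ T, d k ≤ ∑ k ∈ Finset.Icc m (m + ((b - m).toNat : ℤ)), d k :=
            Finset.sum_le_sum_of_subset_of_nonneg hsub (fun k _ _ => hd_nonneg k)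
        _ = p m - p (m + ((b - m).toNat : ℤ) + 1) := htel (b - m).toNat
        _ ≤ p m := by linarith [hp (m + ((b - m).toNat : ℤ) + 1)]
  have htsum_d : ∑' k, d k ≤ p m := Summable.tsum_le_of_sum_le hd_summable hbound
  have hq : ∑' k, d k = 1 - ∑' k : ℤ, min (p k) (p (k + 1)) := by
    rw [hd]
    rw [Summable.tsum_sub hsummable hmin_summable, hsum.tsum_eq]
  linarith [hbmm m]
end

section
/- Let X be a log-concave random variable on the integers with p.m.f. p, mean zero and variance \sigma^2, and let 0 < \epsilon < 1/2. If \sigma \geq \max\{3^{1/\epsilon}, (12e^3)^{1/(1-2\epsilon)}\}, then there exists N_0 \in \{N_{max}, \ldots, N_{max} + 2\lceil\sigma^2\rceil\} such that for all k \geq N_0, p(k+1) \leq (1 - \sigma^{-(2-\epsilon)}) p(k). -/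
set_option maxHeartbeats 1000000 in
/-- Lemma: geometric decay of the right tail of a log-concave p.m.f.  Let `X` be
log-concave on the integers with p.m.f. `p`, mean zero and variance `σ²`, and let
`0 < ε < 1/2`.  Let `N` be the last mode and assume the Bobkov–Marsiglietti–Melbourne
bounds `1/(4σ) ≤ p N ≤ 1/σ`.  If `σ ≥ max (3^(1/ε)) ((12e³)^(1/(1-2ε)))`, then
there is `N₀ ∈ {N, …, N + 2⌈σ²⌉}` such that for all `k ≥ N₀`,
`p (k+1) ≤ (1 - σ^(-(2-ε))) * p k`. -/
theorem logConcave_right_tail_geometric (p : ℤ → ℝ) (hp : ∀ k, 0 ≤ p k) (hsum : HasSum p 1)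
    (hlc : ∀ k : ℤ, p (k - 1) * p (k + 1) ≤ p k ^ 2)
    (hsupp : ∀ a b k : ℤ, a ≤ k → k ≤ b → 0 < p a → 0 < p b → 0 < p k)
    (σ ε : ℝ) (hε0 : 0 < ε) (hε1 : ε < 1 / 2)
    (hmean : HasSum (fun k : ℤ => (k : ℝ) * p k) 0)
    (hvar : HasSum (fun k : ℤ => (k : ℝ) ^ 2 * p k) (σ ^ 2))
    (N : ℤ) (hmax : ∀ k, p k ≤ p N) (hlast : ∀ k, p k = p N → k ≤ N)
    (hbmm₁ : 1 / (4 * σ) ≤ p N) (hbmm₂ : p N ≤ 1 / σ)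
    (hσ : σ ≥ max ((3 : ℝ) ^ (1 / ε)) ((12 * Real.exp 3) ^ (1 / (1 - 2 * ε)))) :
    ∃ N₀ : ℤ, N ≤ N₀ ∧ N₀ ≤ N + 2 * ⌈σ ^ 2⌉ ∧
      ∀ k : ℤ, N₀ ≤ k → p (k + 1) ≤ (1 - σ ^ (-(2 - ε))) * p k := by
  -- basic bounds on σ
  have hσa : (3 : ℝ) ^ (1 / ε) ≤ σ := le_trans (le_max_left _ _) hσ
  have hσb : (12 * Real.exp 3) ^ (1 / (1 - 2 * ε)) ≤ σ := le_trans (le_max_right _ _) hσ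
  have hσpos : 0 < σ := lt_of_lt_of_le (Real.rpow_pos_of_pos (by norm_num) _) hσa
  have hσε3 : (3 : ℝ) ≤ σ ^ ε := by
    have h := Real.rpow_le_rpow (le_of_lt (Real.rpow_pos_of_pos (by norm_num) (1/ε))) hσa hε0.le
    rwa [← Real.rpow_mul (by norm_num : (0:ℝ) ≤ 3), one_div_mul_cancel hε0.ne',
      Real.rpow_one] at h
  have hσ1 : 1 < σ := by
    by_contra h
    push_neg at h
    have := Real.rpow_le_one hσpos.le h hε0.le
    linarith
  have he3 : (4:ℝ) ≤ Real.exp 3 := by nlinarith [Real.add_one_le_exp (3:ℝ)]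
  have hc : (0:ℝ) < 1 - 2 * ε := by linarith
  have hσ12 : 12 * Real.exp 3 ≤ σ ^ (1 - 2*ε) := by
    have hb0 : (0:ℝ) < 12 * Real.exp 3 := by positivity
    have h := Real.rpow_le_rpow (le_of_lt (Real.rpow_pos_of_pos hb0 _)) hσb hc.le
    rwa [← Real.rpow_mul hb0.le, one_div_mul_cancel hc.ne', Real.rpow_one] at h
  -- the decay rate
  set t : ℝ := σ ^ (-(2 - ε)) with htdef
  have ht0 : 0 < t := Real.rpow_pos_of_pos hσpos _
  have ht1 : t < 1 := Real.rpow_lt_one_of_one_lt_of_neg hσ1 (by linarith)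
  set θ : ℝ := 1 - t with hθdef
  have hθ0 : 0 < θ := by simp only [hθdef]; linarith
  have hθ1 : θ < 1 := by simp only [hθdef]; linarith
  -- mode is positive
  have hpN : 0 < p N := lt_of_lt_of_le (by positivity) hbmm₁
  -- ceiling bound
  have hceil : (σ:ℝ)^2 ≤ (⌈σ^2⌉ : ℝ) := Int.le_ceil _
  have hceil1 : (1:ℤ) ≤ ⌈σ^2⌉ := by
    have : (1:ℝ) ≤ σ^2 := by nlinarith
    exact_mod_cast le_trans this hceil
  by_contra hcon
  push_neg at hcon
  obtain ⟨k, hkge, hk1⟩ := hcon (N + 2*⌈σ^2⌉) (by linarith) le_rfl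
  -- hk1 : (1 - σ ^ (-(2-ε))) * p k < p (k+1), i.e. θ * p k < p (k+1)
  have hk1' : θ * p k < p (k+1) := hk1
  have hNk : N ≤ k := by linarith
  have hpk1 : 0 < p (k+1) := lt_of_le_of_lt (mul_nonneg hθ0.le (hp k)) hk1'
  have hpos : ∀ m, N ≤ m → m ≤ k + 1 → 0 < p m := fun m h1 h2 =>
    hsupp N (k+1) m h1 h2 hpN hpk1
  -- backward propagation of the ratio bound
  have key : ∀ j : ℕ, N + j ≤ k → θ * p (k - j) < p (k - j + 1) := by
    intro j
    induction j with
    | zero => intro _; simpa using hk1'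
    | succ j ih =>
      intro hN
      push_cast at hN
      have hNj : N + (j:ℤ) ≤ k := by linarith
      have h1 := ih hNj
      have hlc' := hlc (k - (j:ℤ))
      have hpkj : 0 < p (k - (j:ℤ)) := hpos _ (by linarith) (by linarith [Int.natCast_nonneg j])
      push_cast
      rw [show k - ((j:ℤ) + 1) = k - (j:ℤ) - 1 by ring,
        show k - (j:ℤ) - 1 + 1 = k - (j:ℤ) by ring]
      rcases (hp (k - (j:ℤ) - 1)).eq_or_lt with h0 | h0
      · rw [← h0, mul_zero]; exact hpkj
      · have h2 : p (k - (j:ℤ) - 1) * (θ * p (k - (j:ℤ))) <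
            p (k - (j:ℤ) - 1) * p (k - (j:ℤ) + 1) := by
          exact mul_lt_mul_of_pos_left h1 h0
        nlinarith [hlc', hpkj, h2]
  have key' : ∀ n : ℤ, N ≤ n → n ≤ k → θ * p n < p (n + 1) := by
    intro n hn1 hn2
    have hj : ((k - n).toNat : ℤ) = k - n := Int.toNat_of_nonneg (by linarith)
    have h := key (k - n).toNat (by rw [hj]; linarith)
    rw [hj, show k - (k - n) = n by ring] at h
    exact h
  -- forward geometric growth
  have grow : ∀ j : ℕ, (j:ℤ) ≤ 2*⌈σ^2⌉ → θ ^ j * p N ≤ p (N + j) := by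
    intro j
    induction j with
    | zero => intro _; simp
    | succ j ih =>
      intro hj
      push_cast at hj
      have hj' : (j:ℤ) ≤ 2*⌈σ^2⌉ := by linarith
      have h1 := ih hj'
      have h2 := key' (N + j) (by linarith [Int.natCast_nonneg j]) (by linarith)
      push_cast
      rw [show N + ((j:ℤ) + 1) = N + (j:ℤ) + 1 by ring]
      calc θ ^ (j+1) * p N = θ * (θ ^ j * p N) := by ring
        _ ≤ θ * p (N + (j:ℤ)) := mul_le_mul_of_nonneg_left h1 hθ0.le
        _ ≤ p (N + (j:ℤ) + 1) := (h2).le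
  -- the finite window
  set m : ℕ := (2*⌈σ^2⌉).toNat with hmdef
  have hmM : (m : ℤ) = 2*⌈σ^2⌉ := Int.toNat_of_nonneg (by linarith)
  -- total mass bound
  have hfin : ∑ j ∈ Finset.range (m+1), p (N + j) ≤ 1 := by
    have hinj : Function.Injective (fun j : ℕ => N + (j:ℤ)) := by
      intro a b hab; simpa using hab
    have h := sum_le_hasSum ((Finset.range (m+1)).map ⟨fun j : ℕ => N + (j:ℤ), hinj⟩)
      (fun i _ => hp i) hsum
    rwa [Finset.sum_map] at h
  have hlow : ∑ j ∈ Finset.range (m+1), θ ^ j * p N ≤ ∑ j ∈ Finset.range (m+1), p (N + j) := by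
    refine Finset.sum_le_sum fun j hj => grow j ?_
    have hjm : j ≤ m := Nat.lt_succ_iff.mp (Finset.mem_range.mp hj)
    calc (j:ℤ) ≤ (m:ℤ) := by exact_mod_cast hjm
      _ = 2*⌈σ^2⌉ := hmM
  -- geometric sum
  have hθne : θ ≠ 1 := by linarith
  have hgeom : ∑ j ∈ Finset.range (m+1), θ ^ j = (1 - θ^(m+1)) / t := by
    rw [geom_sum_eq hθne]
    rw [show θ - 1 = -t by simp [hθdef]]
    rw [show θ^(m+1) - 1 = -(1 - θ^(m+1)) by ring, neg_div_neg_eq]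
  -- bound θ^(m+1) ≤ exp(-6)
  have hmr : (2:ℝ) * σ^2 ≤ (m:ℝ) := by
    have : ((m:ℤ):ℝ) = ((2*⌈σ^2⌉:ℤ):ℝ) := by exact_mod_cast hmM
    push_cast at this
    linarith [Int.le_ceil (σ^2)]
  have h2t : σ^2 * t = σ ^ ε := by
    rw [htdef, show (σ:ℝ)^2 = σ ^ ((2:ℕ):ℝ) from (Real.rpow_natCast σ 2).symm,
      ← Real.rpow_add hσpos]
    norm_num
  have hθm : θ^(m+1) ≤ Real.exp (-6) := by
    have h1 : θ ≤ Real.exp (-t) := by linarith [Real.add_one_le_exp (-t)]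
    calc θ^(m+1) ≤ Real.exp (-t) ^ (m+1) := pow_le_pow_left₀ hθ0.le h1 _
      _ = Real.exp (((m:ℝ)+1) * (-t)) := by
          rw [← Real.exp_nat_mul]; push_cast; ring_nf
      _ ≤ Real.exp (-6) := by
          apply Real.exp_le_exp.mpr
          nlinarith [ht0, hmr, h2t, hσε3]
  have hexp6 : Real.exp (-6) ≤ 1/2 := by
    have h7 : (2:ℝ) ≤ Real.exp 6 := by nlinarith [Real.add_one_le_exp (6:ℝ)]
    calc Real.exp (-6) = (Real.exp 6)⁻¹ := Real.exp_neg 6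
      _ ≤ (2:ℝ)⁻¹ := inv_anti₀ (by norm_num) h7
      _ = 1/2 := by norm_num
  -- final chain
  have hptN : 0 < 1 / (4*σ) := by positivity
  have hSnn : 0 ≤ ∑ j ∈ Finset.range (m+1), θ ^ j :=
    Finset.sum_nonneg fun _ _ => pow_nonneg hθ0.le _
  have hSge : (1/2) / t ≤ ∑ j ∈ Finset.range (m+1), θ ^ j := by
    rw [hgeom]
    gcongr
    linarith
  have hchain : (1/2) / t * (1 / (4*σ)) ≤ 1 := by
    calc (1/2) / t * (1 / (4*σ)) ≤ (∑ j ∈ Finset.range (m+1), θ ^ j) * p N :=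
          mul_le_mul hSge hbmm₁ hptN.le hSnn
      _ = ∑ j ∈ Finset.range (m+1), θ ^ j * p N := by rw [Finset.sum_mul]
      _ ≤ ∑ j ∈ Finset.range (m+1), p (N + j) := hlow
      _ ≤ 1 := hfin
  -- turn into σ^(1-ε) ≤ 8
  have hinvt : 1 / t = σ ^ (2 - ε) := by
    rw [htdef, Real.rpow_neg hσpos.le, one_div, inv_inv]
  have hsplit : σ ^ ((2:ℝ) - ε) = σ * σ ^ ((1:ℝ) - ε) := by
    rw [show (2:ℝ) - ε = 1 + (1 - ε) by ring, Real.rpow_add hσpos, Real.rpow_one]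
  have h1e : σ ^ ((1:ℝ)-ε) ≤ 8 := by
    have : (1/2) / t = (1/2) * (σ * σ ^ ((1:ℝ)-ε)) := by
      rw [div_eq_mul_one_div, hinvt, hsplit]
    rw [this] at hchain
    have h4 : (1/2) * (σ * σ ^ ((1:ℝ)-ε)) * (1/(4*σ)) = σ ^ ((1:ℝ)-ε) / 8 := by
      field_simp; ring
    rw [h4] at hchain
    linarith
  have hmono : σ ^ ((1:ℝ)-2*ε) ≤ σ ^ ((1:ℝ)-ε) :=
    Real.rpow_le_rpow_of_exponent_le hσ1.le (by linarith)
  nlinarith [hσ12, hmono, h1e, he3]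
end

section
/- Let X be a log-concave random variable on the integers with p.m.f. p, mean zero and variance \sigma^2, and let 0 < \epsilon < 1/2. If \sigma \geq \max\{3^{1/\epsilon}, (12e^3)^{1/(1-2\epsilon)}\}, then there exists N_0^- \in \{N_{max} - 2\lceil\sigma^2\rceil, \ldots, N_{max}\} such that for all k \leq N_0^-, p(k-1) \leq (1 - \sigma^{-(2-\epsilon)}) p(k). -/
/-!
If no index `m` in the window `[N - 2⌈σ²⌉, N]` satisfied `p (m - 1) ≤ (1 - δ) p m`, with
`δ = σ^(-(2-ε))`, then `p` would dominate the geometric sequence `(1 - δ)^j p N` along the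
window, whose mass is at least `2σ² / (1 + 2σ^ε) · 1/(4σ) > 1`. Once such an `m` is found,
log-concavity makes the ratio `p (k - 1) / p k` nondecreasing in `k`, so the bound propagates to
every `k ≤ m`.
-/

open Finset Real

theorem pred_mul_le_pred_mul_of_logConcave {p : ℤ → ℝ} (hp : ∀ k, 0 ≤ p k)
    (hlc : ∀ k, p (k - 1) * p (k + 1) ≤ p k ^ 2) {k m : ℤ} (hkm : k ≤ m)
    (hpos : ∀ j, k ≤ j → j ≤ m → 0 < p j) :
    p (k - 1) * p m ≤ p (m - 1) * p k := by
  induction m, hkm using Int.leInduction with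
  | base => exact le_rfl
  | succ m hkm ih =>
    have hpm : 0 < p m := hpos m hkm (by omega)
    have ih := ih fun j hj hjm => hpos j hj (by omega)
    rw [add_sub_cancel_right]
    refine le_of_mul_le_mul_right ?_ hpm
    calc p (k - 1) * p (m + 1) * p m = p (k - 1) * p m * p (m + 1) := by ring
      _ ≤ p (m - 1) * p k * p (m + 1) := mul_le_mul_of_nonneg_right ih (hp _)
      _ = p (m - 1) * p (m + 1) * p k := by ring
      _ ≤ p m ^ 2 * p k := mul_le_mul_of_nonneg_right (hlc m) (hp _)
      _ = p m * p k * p m := by ring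

theorem pred_le_mul_of_le_of_logConcave {p : ℤ → ℝ} (hp : ∀ k, 0 ≤ p k)
    (hlc : ∀ k, p (k - 1) * p (k + 1) ≤ p k ^ 2)
    (hsupp : ∀ a b k : ℤ, a ≤ k → k ≤ b → 0 < p a → 0 < p b → 0 < p k)
    {c : ℝ} {m N : ℤ} (hmN : m ≤ N) (hpN : 0 < p N) (hm : p (m - 1) ≤ c * p m)
    {k : ℤ} (hk : k ≤ m) :
    p (k - 1) ≤ c * p k := by
  by_cases hpk : 0 < p k
  · have hpm : 0 < p m := hsupp k N m hk hmN hpk hpN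
    have hratio := pred_mul_le_pred_mul_of_logConcave hp hlc hk
      fun j hj hjm => hsupp k m j hj hjm hpk hpm
    refine le_of_mul_le_mul_right ?_ hpm
    calc p (k - 1) * p m ≤ p (m - 1) * p k := hratio
      _ ≤ c * p m * p k := mul_le_mul_of_nonneg_right hm (hp k)
      _ = c * p k * p m := by ring
  · have hk0 : p k = 0 := le_antisymm (not_lt.mp hpk) (hp k)
    have hk1 : p (k - 1) = 0 := by
      by_contra hne
      exact hpk (hsupp (k - 1) N k (by omega) (hk.trans hmN)
        (lt_of_le_of_ne (hp _) (Ne.symm hne)) hpN)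
    rw [hk0, hk1, mul_zero]

theorem exists_pred_le_mul_of_one_lt_geom_sum_mul {p : ℤ → ℝ} (hp : ∀ k, 0 ≤ p k)
    (hsum : HasSum p 1) {c : ℝ} (hc : 0 ≤ c) (N : ℤ) (n : ℕ)
    (hmass : 1 < (∑ j ∈ range (n + 1), c ^ j) * p N) :
    ∃ m, N - n ≤ m ∧ m ≤ N ∧ p (m - 1) ≤ c * p m := by
  by_contra! hgrow
  have hlower : ∀ j ≤ n, c ^ j * p N ≤ p (N - j) := by
    intro j
    induction j with
    | zero => simp
    | succ j ih =>
      intro hj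
      calc c ^ (j + 1) * p N = c * (c ^ j * p N) := by ring
        _ ≤ c * p (N - j) := mul_le_mul_of_nonneg_left (ih (by omega)) hc
        _ ≤ p (N - j - 1) := (hgrow _ (by omega) (by omega)).le
        _ = p (N - ↑(j + 1)) := by push_cast; ring_nf
  have hwindow : ∑ j ∈ range (n + 1), p (N - j) ≤ 1 := by
    have h := sum_le_hasSum ((range (n + 1)).image fun j : ℕ => N - j) (fun i _ => hp i) hsum
    rwa [sum_image fun _ _ _ _ h => by omega] at h
  refine hmass.not_ge ?_
  calc (∑ j ∈ range (n + 1), c ^ j) * p N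
      = ∑ j ∈ range (n + 1), c ^ j * p N := sum_mul ..
    _ ≤ ∑ j ∈ range (n + 1), p (N - j) :=
      sum_le_sum fun j hj => hlower j (Nat.lt_succ_iff.mp (mem_range.mp hj))
    _ ≤ 1 := hwindow

theorem natCast_div_one_add_mul_le_geom_sum {δ : ℝ} (hδ0 : 0 ≤ δ) (hδ1 : δ ≤ 1) (n : ℕ) :
    n / (1 + n * δ) ≤ ∑ j ∈ range n, (1 - δ) ^ j := by
  have hgeom : (∑ j ∈ range n, (1 - δ) ^ j) * δ = 1 - (1 - δ) ^ n := by
    linear_combination -geom_sum_mul (1 - δ) n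
  -- given `hgeom`, the claim is equivalent to `n (1 - δ)^n ≤ ∑_{j<n} (1 - δ)^j`
  have hterms : n * (1 - δ) ^ n ≤ ∑ j ∈ range n, (1 - δ) ^ j := by
    calc (n : ℝ) * (1 - δ) ^ n = ∑ _j ∈ range n, (1 - δ) ^ n := by simp
      _ ≤ ∑ j ∈ range n, (1 - δ) ^ j := sum_le_sum fun j hj =>
        pow_le_pow_of_le_one (by linarith) (by linarith) (mem_range.mp hj).le
  rw [div_le_iff₀ (by positivity)]
  linear_combination hterms - n * hgeom

theorem one_lt_geom_sum_one_sub_mul {σ δ q : ℝ} (hδ0 : 0 ≤ δ) (hδ1 : δ ≤ 1)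
    (hσ : 2 + 4 * σ ^ 2 * δ < σ) (hq : 1 / (4 * σ) ≤ q) {n : ℕ} (hn : 2 * σ ^ 2 ≤ n) :
    1 < (∑ j ∈ range n, (1 - δ) ^ j) * q := by
  have hσ0 : 0 < σ := by nlinarith [sq_nonneg σ]
  have hS : 2 * σ ^ 2 / (1 + 2 * σ ^ 2 * δ) ≤ ∑ j ∈ range n, (1 - δ) ^ j := by
    refine le_trans ?_ (natCast_div_one_add_mul_le_geom_sum hδ0 hδ1 n)
    rw [div_le_div_iff₀ (by positivity) (by positivity)]
    nlinarith
  calc 1 < σ / (2 + 4 * σ ^ 2 * δ) := (one_lt_div (by positivity)).mpr hσ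
    _ = 2 * σ ^ 2 / (1 + 2 * σ ^ 2 * δ) * (1 / (4 * σ)) := by field_simp; ring
    _ ≤ (∑ j ∈ range n, (1 - δ) ^ j) * q :=
      mul_le_mul hS hq (by positivity) (le_trans (by positivity) hS)

theorem two_add_four_mul_rpow_lt {σ ε : ℝ} (hσ : 1 ≤ σ) (hε : 0 ≤ ε)
    (h : 12 ≤ σ ^ (1 - 2 * ε)) :
    2 + 4 * σ ^ ε < σ := by
  have hσ0 : 0 < σ := by linarith
  have h12 : 12 ≤ σ ^ (1 - ε) :=
    h.trans (rpow_le_rpow_of_exponent_le hσ (by linarith))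
  have hsplit : σ = σ ^ ε * σ ^ (1 - ε) := by
    rw [← rpow_add hσ0, add_sub_cancel, rpow_one]
  nlinarith [one_le_rpow hσ hε]

theorem twelve_le_rpow_of_le {σ ε : ℝ} (hε : ε < 1 / 2)
    (hσ : (12 * exp 3) ^ (1 / (1 - 2 * ε)) ≤ σ) :
    12 ≤ σ ^ (1 - 2 * ε) := by
  have hσ0 : 0 ≤ σ := le_trans (by positivity) hσ
  have hexp : 12 * exp 3 ≤ σ ^ (1 - 2 * ε) := by
    rwa [← rpow_inv_le_iff_of_pos (by positivity) hσ0 (by linarith), ← one_div]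
  nlinarith [add_one_le_exp 3]

theorem logConcave_left_tail_geometric_general (p : ℤ → ℝ) (hp : ∀ k, 0 ≤ p k) (hsum : HasSum p 1)
    (hlc : ∀ k : ℤ, p (k - 1) * p (k + 1) ≤ p k ^ 2)
    (hsupp : ∀ a b k : ℤ, a ≤ k → k ≤ b → 0 < p a → 0 < p b → 0 < p k)
    (σ ε : ℝ) (hε0 : 0 < ε) (hε1 : ε < 1 / 2)
    (N : ℤ) (hbmm₁ : 1 / (4 * σ) ≤ p N)
    (hσ : σ ≥ max ((3 : ℝ) ^ (1 / ε)) ((12 * Real.exp 3) ^ (1 / (1 - 2 * ε)))) :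
    ∃ N₀ : ℤ, N - 2 * ⌈σ ^ 2⌉ ≤ N₀ ∧ N₀ ≤ N ∧
      ∀ k : ℤ, k ≤ N₀ → p (k - 1) ≤ (1 - σ ^ (-(2 - ε))) * p k := by
  have hσ0 : 0 < σ := lt_of_lt_of_le (by positivity) (le_of_max_le_right hσ)
  have h12 : 12 ≤ σ ^ (1 - 2 * ε) := twelve_le_rpow_of_le hε1 (le_of_max_le_right hσ)
  have hσ1 : 1 ≤ σ := by
    by_contra! hlt
    linarith [rpow_le_one hσ0.le hlt.le (by linarith : 0 ≤ 1 - 2 * ε)]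
  set δ := σ ^ (-(2 - ε))
  have hδ0 : 0 ≤ δ := by positivity
  have hδ1 : δ ≤ 1 := rpow_le_one_of_one_le_of_nonpos hσ1 (by linarith)
  have hσδ : 2 + 4 * σ ^ 2 * δ < σ := by
    have hσ2δ : σ ^ 2 * δ = σ ^ ε := by
      rw [← rpow_natCast, ← rpow_add hσ0]
      norm_num
    rw [mul_assoc, hσ2δ]
    exact two_add_four_mul_rpow_lt hσ1 hε0.le h12
  obtain ⟨n, hn⟩ : ∃ n : ℕ, (n : ℤ) = 2 * ⌈σ ^ 2⌉ :=
    ⟨_, Int.toNat_of_nonneg (by positivity)⟩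
  have hn2 : 2 * σ ^ 2 ≤ ((n + 1 : ℕ) : ℝ) := by
    have : (n : ℝ) = 2 * ⌈σ ^ 2⌉ := by exact_mod_cast hn
    push_cast
    linarith [Int.le_ceil (σ ^ 2)]
  obtain ⟨m, hNm, hmN, hm⟩ := exists_pred_le_mul_of_one_lt_geom_sum_mul hp hsum
    (sub_nonneg.mpr hδ1) N n (one_lt_geom_sum_one_sub_mul hδ0 hδ1 hσδ hbmm₁ hn2)
  have hpN : 0 < p N := lt_of_lt_of_le (by positivity) hbmm₁
  exact ⟨m, hn ▸ hNm, hmN, fun k hk =>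
    pred_le_mul_of_le_of_logConcave hp hlc hsupp hmN hpN hm hk⟩

/-- Lemma: geometric decay of the left tail of a log-concave p.m.f.  Let `X` be
log-concave on the integers with p.m.f. `p`, mean zero and variance `σ²`, and let
`0 < ε < 1/2`.  Let `N` be the last mode and assume the Bobkov–Marsiglietti–Melbourne
bounds `1/(4σ) ≤ p N ≤ 1/σ`.  If `σ ≥ max (3^(1/ε)) ((12e³)^(1/(1-2ε)))`, then
there is `N₀⁻ ∈ {N - 2⌈σ²⌉, …, N}` such that for all `k ≤ N₀⁻`,
`p (k-1) ≤ (1 - σ^(-(2-ε))) * p k`. -/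
theorem logConcave_left_tail_geometric (p : ℤ → ℝ) (hp : ∀ k, 0 ≤ p k) (hsum : HasSum p 1)
    (hlc : ∀ k : ℤ, p (k - 1) * p (k + 1) ≤ p k ^ 2)
    (hsupp : ∀ a b k : ℤ, a ≤ k → k ≤ b → 0 < p a → 0 < p b → 0 < p k)
    (σ ε : ℝ) (hε0 : 0 < ε) (hε1 : ε < 1 / 2)
    (hmean : HasSum (fun k : ℤ => (k : ℝ) * p k) 0)
    (hvar : HasSum (fun k : ℤ => (k : ℝ) ^ 2 * p k) (σ ^ 2))
    (N : ℤ) (hmax : ∀ k, p k ≤ p N) (hlast : ∀ k, p k = p N → k ≤ N)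
    (hbmm₁ : 1 / (4 * σ) ≤ p N) (hbmm₂ : p N ≤ 1 / σ)
    (hσ : σ ≥ max ((3 : ℝ) ^ (1 / ε)) ((12 * Real.exp 3) ^ (1 / (1 - 2 * ε)))) :
    ∃ N₀ : ℤ, N - 2 * ⌈σ ^ 2⌉ ≤ N₀ ∧ N₀ ≤ N ∧
      ∀ k : ℤ, k ≤ N₀ → p (k - 1) ≤ (1 - σ ^ (-(2 - ε))) * p k :=
  logConcave_left_tail_geometric_general p hp hsum hlc hsupp σ ε hε0 hε1 N hbmm₁ hσ
end

section
/- Let X be a random variable on \mathbb{Z} with mean 0 and variance \sigma^2 > 0, with log-concave p.m.f. p satisfying p_{max} \geq 1/(4\sigma). Suppose 0 < \theta < 1 and p(k+1) \geq \theta p(k) for all k with N_{max} \leq k \leq N_{max} + 2\lceil\sigma^2\rceil. Then \sigma^2 \geq \sum_{m = \max\{0, -N_{max}\}}^{2\lceil\sigma^2\rceil} (N_{max} + m)^2 \theta^m / (4\sigma). -/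
/-- Let `X` be a mean-zero random variable on `ℤ` with variance `σ² > 0` and
log-concave p.m.f. `p` whose (last) mode `N` satisfies `p N ≥ 1/(4σ)`.  If
`0 < θ < 1` and `θ * p k ≤ p (k+1)` for all `N ≤ k ≤ N + 2⌈σ²⌉`, then
`σ² ≥ ∑_{m = max(0, -N)}^{2⌈σ²⌉} (N + m)² θ^m / (4σ)`. -/
theorem second_moment_lower_bound (p : ℤ → ℝ) (hp : ∀ k, 0 ≤ p k) (hsum : HasSum p 1)
    (hlc : ∀ k : ℤ, p (k - 1) * p (k + 1) ≤ p k ^ 2)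
    (hsupp : ∀ a b k : ℤ, a ≤ k → k ≤ b → 0 < p a → 0 < p b → 0 < p k)
    (σ : ℝ) (hσ : 0 < σ)
    (hmean : HasSum (fun k : ℤ => (k : ℝ) * p k) 0)
    (hvar : HasSum (fun k : ℤ => (k : ℝ) ^ 2 * p k) (σ ^ 2))
    (N : ℤ) (hmax : ∀ k, p k ≤ p N) (hlast : ∀ k, p k = p N → k ≤ N)
    (hbmm : 1 / (4 * σ) ≤ p N)
    (θ : ℝ) (hθ0 : 0 < θ) (hθ1 : θ < 1)
    (hratio : ∀ k : ℤ, N ≤ k → k ≤ N + 2 * ⌈σ ^ 2⌉ → θ * p k ≤ p (k + 1)) :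
    ∑ m ∈ Finset.Icc (max 0 (-N)) (2 * ⌈σ ^ 2⌉), ((N : ℝ) + (m : ℝ)) ^ 2 * θ ^ m / (4 * σ)
      ≤ σ ^ 2 := by
  -- step lemma
  have hstep : ∀ m : ℕ, (m : ℤ) ≤ 2 * ⌈σ ^ 2⌉ → θ ^ m * p N ≤ p (N + m) := by
    intro m
    induction m with
    | zero => intro _; simp
    | succ n ih =>
      intro hle
      have hn : (n : ℤ) ≤ 2 * ⌈σ ^ 2⌉ := by push_cast at hle ⊢; omega
      have h1 := ih hn
      have h2 : θ * p (N + n) ≤ p (N + n + 1) := by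
        apply hratio
        · omega
        · omega
      calc θ ^ (n + 1) * p N = θ * (θ ^ n * p N) := by ring
        _ ≤ θ * p (N + n) := by
            exact mul_le_mul_of_nonneg_left h1 hθ0.le
        _ ≤ p (N + n + 1) := h2
        _ = p (N + (n + 1 : ℕ)) := by push_cast; ring_nf
  -- termwise bound
  have hterm : ∀ m ∈ Finset.Icc (max 0 (-N)) (2 * ⌈σ ^ 2⌉),
      ((N : ℝ) + (m : ℝ)) ^ 2 * θ ^ m / (4 * σ) ≤ ((N + m : ℤ) : ℝ) ^ 2 * p (N + m) := by
    intro m hm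
    simp only [Finset.mem_Icc] at hm
    have hm0 : 0 ≤ m := le_trans (le_max_left _ _) hm.1
    obtain ⟨n, rfl⟩ : ∃ n : ℕ, m = (n : ℤ) := ⟨m.toNat, (Int.toNat_of_nonneg hm0).symm⟩
    have hz : (θ : ℝ) ^ (n : ℤ) = θ ^ n := zpow_natCast θ n
    have hb : θ ^ n / (4 * σ) ≤ p (N + n) := by
      calc θ ^ n / (4 * σ) = θ ^ n * (1 / (4 * σ)) := by ring
        _ ≤ θ ^ n * p N := by
            exact mul_le_mul_of_nonneg_left hbmm (pow_nonneg hθ0.le n)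
        _ ≤ p (N + n) := hstep n hm.2
    have hsq : (0 : ℝ) ≤ ((N : ℝ) + (n : ℝ)) ^ 2 := sq_nonneg _
    calc ((N : ℝ) + (n : ℝ)) ^ 2 * θ ^ (n : ℤ) / (4 * σ)
        = ((N : ℝ) + (n : ℝ)) ^ 2 * (θ ^ n / (4 * σ)) := by rw [hz]; ring
      _ ≤ ((N : ℝ) + (n : ℝ)) ^ 2 * p (N + n) := mul_le_mul_of_nonneg_left hb hsq
      _ = ((N + (n : ℤ) : ℤ) : ℝ) ^ 2 * p (N + n) := by push_cast; ring
  -- sum ≤ shifted sum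
  have h1 : ∑ m ∈ Finset.Icc (max 0 (-N)) (2 * ⌈σ ^ 2⌉),
      ((N : ℝ) + (m : ℝ)) ^ 2 * θ ^ m / (4 * σ)
      ≤ ∑ m ∈ Finset.Icc (max 0 (-N)) (2 * ⌈σ ^ 2⌉), ((N + m : ℤ) : ℝ) ^ 2 * p (N + m) :=
    Finset.sum_le_sum hterm
  have h2 : ∑ m ∈ Finset.Icc (max 0 (-N)) (2 * ⌈σ ^ 2⌉), ((N + m : ℤ) : ℝ) ^ 2 * p (N + m)
      = ∑ k ∈ Finset.Icc (N + max 0 (-N)) (N + 2 * ⌈σ ^ 2⌉), ((k : ℤ) : ℝ) ^ 2 * p k := by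
    rw [← Finset.map_add_left_Icc, Finset.sum_map]
    rfl
  have h3 : ∑ k ∈ Finset.Icc (N + max 0 (-N)) (N + 2 * ⌈σ ^ 2⌉), ((k : ℤ) : ℝ) ^ 2 * p k
      ≤ σ ^ 2 := by
    rw [← hvar.tsum_eq]
    exact Summable.sum_le_tsum _ (fun k _ => mul_nonneg (sq_nonneg _) (hp k)) hvar.summable
  linarith
end
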